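/- arXiv:1307.4992 — 2 statements merged into one kernel-verified Lean document; each statement's English description precedes it below -/
import Mathlib

section
/- Let H ∈ (1/2,1), λ > 0 and T > 0. Then ∫₀ᵀ ∫₀ᵀ e^{−λ t} e^{−λ s} |s−t|^{2H−2} ds dt ≤ Γ(2H−1)/λ^{2H}. -/
/-!
The integrand is symmetric in `(s, t)`, so the double integral is at most twice the integral
over `t ≤ s`. For fixed `t`, substituting `s = t + u` there gives
`e^{-2λt} ∫₀^∞ e^{-λu} u^{2H-2} du = e^{-2λt} Γ(2H-1)/λ^{2H-1}`, and `∫₀^∞ e^{-2λt} dt = 1/(2λ)`.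
-/

open MeasureTheory Set
open scoped ENNReal

section Symmetric

variable {α : Type*} [MeasurableSpace α] [TopologicalSpace α] [LinearOrder α]
  [OrderClosedTopology α] [SecondCountableTopology α] [OpensMeasurableSpace α]

theorem lintegral_lintegral_le_two_mul_of_symmetric {μ : Measure α} [SFinite μ]
    {f : α → α → ℝ≥0∞} (hf : Measurable (Function.uncurry f)) (hsymm : ∀ x y, f x y = f y x) :
    ∫⁻ x, ∫⁻ y, f x y ∂μ ∂μ ≤ 2 * ∫⁻ x, ∫⁻ y in Ici x, f x y ∂μ ∂μ := by
  set g : α → α → ℝ≥0∞ := fun x => (Ici x).indicator (f x) with hg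
  have hg_meas : Measurable (Function.uncurry g) := by
    have : Function.uncurry g = {p : α × α | p.1 ≤ p.2}.indicator (Function.uncurry f) := by
      ext p; rfl
    rw [this]
    exact hf.indicator measurableSet_le'
  have hle : ∀ x y, f x y ≤ g x y + g y x := by
    intro x y
    rcases le_total x y with hxy | hyx
    · simp [hg, indicator_of_mem (show y ∈ Ici x from hxy)]
    · simp [hg, indicator_of_mem (show x ∈ Ici y from hyx), hsymm x y]
  calc ∫⁻ x, ∫⁻ y, f x y ∂μ ∂μ
      ≤ ∫⁻ x, ∫⁻ y, (g x y + g y x) ∂μ ∂μ :=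
        lintegral_mono fun x => lintegral_mono fun y => hle x y
    _ = ∫⁻ x, ∫⁻ y, g x y ∂μ ∂μ + ∫⁻ x, ∫⁻ y, g y x ∂μ ∂μ := by
        rw [lintegral_congr fun x => lintegral_add_left hg_meas.of_uncurry_left _,
          lintegral_add_left hg_meas.lintegral_prod_right]
    _ = 2 * ∫⁻ x, ∫⁻ y in Ici x, f x y ∂μ ∂μ := by
        rw [lintegral_lintegral_swap (f := fun x y => g y x)
          (hg_meas.comp measurable_swap).aemeasurable, ← two_mul]
        simp only [hg, lintegral_indicator measurableSet_Ici]

end Symmetric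

theorem lintegral_Ioi_rpow_mul_exp_neg_mul {a r : ℝ} (ha : 0 < a) (hr : 0 < r) :
    ∫⁻ t in Ioi 0, ENNReal.ofReal (t ^ (a - 1) * Real.exp (-(r * t)))
      = ENNReal.ofReal (Real.Gamma a / r ^ a) := by
  have hint : IntegrableOn (fun t : ℝ => t ^ (a - 1) * Real.exp (-(r * t))) (Ioi 0) := by
    simpa using integrableOn_rpow_mul_exp_neg_mul_rpow (s := a - 1) (by linarith) one_pos hr
  rw [← ofReal_integral_eq_lintegral_ofReal hint, Real.integral_rpow_mul_exp_neg_mul_Ioi ha hr,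
    one_div, Real.inv_rpow hr.le, inv_mul_eq_div]
  filter_upwards [self_mem_ae_restrict measurableSet_Ioi] with t ht
  exact mul_nonneg (Real.rpow_nonneg ht.le _) (Real.exp_pos _).le

theorem lintegral_Ioi_comp_sub (f : ℝ → ℝ≥0∞) (c : ℝ) :
    ∫⁻ s in Ioi c, f (s - c) = ∫⁻ u in Ioi 0, f u := by
  simpa using (measurePreserving_sub_right volume c).setLIntegral_comp_preimage_emb
    (measurableEmbedding_subRight c) f (Ioi 0)

theorem lintegral_Ioi_exp_neg_mul_mul_rpow_sub {a r : ℝ} (ha : 0 < a) (hr : 0 < r) (c : ℝ) :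
    ∫⁻ s in Ioi c, ENNReal.ofReal (Real.exp (-(r * s)) * (s - c) ^ (a - 1))
      = ENNReal.ofReal (Real.exp (-(r * c))) * ENNReal.ofReal (Real.Gamma a / r ^ a) := by
  have hsplit : ∀ s, ENNReal.ofReal (Real.exp (-(r * s)) * (s - c) ^ (a - 1))
      = ENNReal.ofReal (Real.exp (-(r * c)))
        * ENNReal.ofReal ((s - c) ^ (a - 1) * Real.exp (-(r * (s - c)))) := by
    intro s
    rw [← ENNReal.ofReal_mul (Real.exp_pos _).le, mul_left_comm, ← Real.exp_add]
    ring_nf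
  simp_rw [hsplit]
  rw [lintegral_const_mul' _ _ ENNReal.ofReal_ne_top,
    lintegral_Ioi_comp_sub (fun u => ENNReal.ofReal (u ^ (a - 1) * Real.exp (-(r * u)))) c,
    lintegral_Ioi_rpow_mul_exp_neg_mul ha hr]

theorem lintegral_Ici_exp_neg_mul {r : ℝ} (hr : 0 < r) :
    ∫⁻ t in Ici 0, ENNReal.ofReal (Real.exp (-(r * t))) = ENNReal.ofReal (1 / r) := by
  rw [← setLIntegral_congr Ioi_ae_eq_Ici]
  simpa using lintegral_Ioi_rpow_mul_exp_neg_mul one_pos hr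

theorem lintegral_Ioi_exp_mul_exp_mul_abs_sub_rpow {a l : ℝ} (ha : 0 < a) (hl : 0 < l) (t : ℝ) :
    ∫⁻ s in Ioi t, ENNReal.ofReal (Real.exp (-l * t) * Real.exp (-l * s) * |s - t| ^ (a - 1))
      = ENNReal.ofReal (Real.exp (-(2 * l * t))) * ENNReal.ofReal (Real.Gamma a / l ^ a) := calc
  _ = ∫⁻ s in Ioi t, ENNReal.ofReal (Real.exp (-l * t)) *
        ENNReal.ofReal (Real.exp (-(l * s)) * (s - t) ^ (a - 1)) := by
    refine setLIntegral_congr_fun measurableSet_Ioi fun s (hs : t < s) => ?_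
    rw [← ENNReal.ofReal_mul (Real.exp_pos _).le, abs_of_pos (sub_pos.2 hs)]
    ring_nf
  _ = _ := by
    rw [lintegral_const_mul' _ _ ENNReal.ofReal_ne_top,
      lintegral_Ioi_exp_neg_mul_mul_rpow_sub ha hl, ← mul_assoc,
      ← ENNReal.ofReal_mul (Real.exp_pos _).le, ← Real.exp_add]
    ring_nf

theorem lintegral_Icc_lintegral_Icc_exp_mul_exp_mul_abs_sub_rpow_le {a l : ℝ} (ha : 0 < a)
    (hl : 0 < l) (T : ℝ) :
    ∫⁻ t in Icc 0 T, ∫⁻ s in Icc 0 T,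
        ENNReal.ofReal (Real.exp (-l * t) * Real.exp (-l * s) * |s - t| ^ (a - 1))
      ≤ ENNReal.ofReal (Real.Gamma a / l ^ (a + 1)) := by
  set F : ℝ → ℝ → ℝ≥0∞ := fun t s =>
    ENNReal.ofReal (Real.exp (-l * t) * Real.exp (-l * s) * |s - t| ^ (a - 1))
  have hF : Measurable (Function.uncurry F) := by unfold F; fun_prop
  have hsymm : ∀ t s, F t s = F s t := fun t s => by
    simp only [F, abs_sub_comm s t, mul_comm (Real.exp (-l * t))]
  have hinner : ∀ t, ∫⁻ s in Ici t, F t s ∂(volume.restrict (Icc 0 T))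
      ≤ ENNReal.ofReal (Real.exp (-(2 * l * t))) * ENNReal.ofReal (Real.Gamma a / l ^ a) := by
    intro t
    rw [← lintegral_Ioi_exp_mul_exp_mul_abs_sub_rpow ha hl, ← setLIntegral_congr Ioi_ae_eq_Ici,
      Measure.restrict_restrict measurableSet_Ioi]
    exact lintegral_mono_set inter_subset_left
  calc _ ≤ 2 * ∫⁻ t in Icc 0 T, ∫⁻ s in Ici t, F t s ∂(volume.restrict (Icc 0 T)) :=
        lintegral_lintegral_le_two_mul_of_symmetric hF hsymm
    _ ≤ 2 * ∫⁻ t in Icc 0 T, ENNReal.ofReal (Real.exp (-(2 * l * t))) *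
          ENNReal.ofReal (Real.Gamma a / l ^ a) := by
        gcongr with t; exact hinner t
    _ ≤ 2 * (ENNReal.ofReal (1 / (2 * l)) * ENNReal.ofReal (Real.Gamma a / l ^ a)) := by
        rw [lintegral_mul_const' _ _ ENNReal.ofReal_ne_top,
          ← lintegral_Ici_exp_neg_mul (by positivity : 0 < 2 * l)]
        gcongr
        exact Icc_subset_Ici_self
    _ = _ := by
        rw [show (2 : ℝ≥0∞) = ENNReal.ofReal 2 by simp, ← ENNReal.ofReal_mul (by positivity),
          ← ENNReal.ofReal_mul (by positivity), Real.rpow_add_one hl.ne']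
        congr 1
        field_simp

theorem statement10_general (H l T : ℝ) (hH : H ∈ Set.Ioo (1 / 2 : ℝ) 1) (hl : 0 < l) :
    (∫⁻ t in Set.Icc (0 : ℝ) T, ∫⁻ s in Set.Icc (0 : ℝ) T,
        ENNReal.ofReal (Real.exp (-l * t) * Real.exp (-l * s) * |s - t| ^ (2 * H - 2)))
      ≤ ENNReal.ofReal (Real.Gamma (2 * H - 1) / l ^ (2 * H)) := by
  have h := lintegral_Icc_lintegral_Icc_exp_mul_exp_mul_abs_sub_rpow_le
    (a := 2 * H - 1) (by linarith [hH.1]) hl T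
  rwa [sub_sub, one_add_one_eq_two, sub_add_cancel] at h

/-- For `H > 1/2` and `λ > 0`:
`∫₀ᵀ∫₀ᵀ e^{-λt} e^{-λs} |s-t|^{2H-2} ds dt ≤ Γ(2H-1)/λ^{2H}`. -/
theorem statement10 (H l T : ℝ) (hH : H ∈ Set.Ioo (1 / 2 : ℝ) 1) (hl : 0 < l) (hT : 0 < T) :
    (∫⁻ t in Set.Icc (0 : ℝ) T, ∫⁻ s in Set.Icc (0 : ℝ) T,
        ENNReal.ofReal (Real.exp (-l * t) * Real.exp (-l * s) * |s - t| ^ (2 * H - 2)))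
      ≤ ENNReal.ofReal (Real.Gamma (2 * H - 1) / l ^ (2 * H)) :=
  statement10_general H l T hH hl
end

section
/- Let H ∈ (0,1/2), T > 0, and let (λ_k)_{k∈ℕ} be a sequence of positive reals and (q_k)_{k∈ℕ} a real sequence with ∑_{k=1}^∞ q_k²/λ_k^{2H} < ∞. Then ∑_{k=1}^∞ q_k² [ ∫₀ᵀ e^{−2λ_k s}(T−s)^{2H−1} ds + ∫₀ᵀ e^{−2λ_k s} s^{2H−1} ds + ∫₀ᵀ ( ∫ₛᵀ (e^{−λ_k s} − e^{−λ_k t})(t−s)^{H−3/2} dt )² ds ] < ∞. (This is the summability estimate, with each bracket bounded by a constant times λ_k^{−2H}, that establishes the Hilbert–Schmidt property of the covariance factorization and hence existence of a weak solution of the stochastic heat equation driven by cylindrical fractional Brownian motion with H < 1/2 when A has eigenvalues −λ_k and the noise has weights q_k along the eigenbasis.) -/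
/-!
Each bracket is at most `C λ^{-2H}` with `C` depending only on `H` and `T`, so the series is
dominated by `C ∑ q_k² / λ_k^{2H}`.

* First integral: `e^{-x} ≤ x^{-2H}` turns it into `(2λ)^{-2H}` times the Beta integral
  `∫₀ᵀ s^{-2H} (T - s)^{2H-1} ds`, which converges because `0 < 2H < 1`.
* Second integral: extending it to `(0, ∞)` gives `(2λ)^{-2H} Γ(2H)`.
* Third integral: `e^{-λs} - e^{-λt} ≤ e^{-λs} min(1, λ(t - s))`, and
  `∫₀^∞ min(1, λu) u^{H-3/2} du` is a multiple of `λ^{1/2-H}` (split at `u = 1/λ`). Squaring and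
  integrating `e^{-2λs}` over `s` gives a multiple of `λ^{1-2H} / λ = λ^{-2H}`.
-/

open MeasureTheory Set Real
open scoped ENNReal

theorem exp_neg_le_rpow_neg {x a : ℝ} (hx : 0 < x) (ha₀ : 0 ≤ a) (ha₁ : a ≤ 1) :
    exp (-x) ≤ x ^ (-a) := by
  have hxa : x ^ a ≤ exp x := by
    rcases le_total x 1 with h | h
    · exact (rpow_le_one hx.le h ha₀).trans (one_le_exp hx.le)
    · calc x ^ a ≤ x ^ (1 : ℝ) := rpow_le_rpow_of_exponent_le h ha₁
        _ = x := rpow_one x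
        _ ≤ exp x := by linarith [add_one_le_exp x]
  rw [exp_neg, rpow_neg hx.le]
  exact inv_anti₀ (rpow_pos_of_pos hx a) hxa

theorem exp_neg_sub_exp_neg_le (b s t : ℝ) :
    exp (-b * s) - exp (-b * t) ≤ exp (-b * s) * min 1 (b * (t - s)) := by
  have hsplit : exp (-b * t) = exp (-b * s) * exp (-(b * (t - s))) := by
    rw [← exp_add]; ring_nf
  rw [hsplit, ← mul_one_sub]
  refine mul_le_mul_of_nonneg_left (le_min ?_ ?_) (exp_pos _).le
  · linarith [exp_pos (-(b * (t - s)))]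
  · linarith [one_sub_le_exp_neg (b * (t - s))]

theorem setLIntegral_Ioi_comp_sub_right (f : ℝ → ℝ≥0∞) (s : ℝ) :
    ∫⁻ t in Ioi s, f (t - s) = ∫⁻ u in Ioi 0, f u := by
  have := (measurePreserving_sub_right volume s).setLIntegral_comp_preimage_emb
    (measurableEmbedding_subRight s) f (Ioi 0)
  rwa [show (fun t => t - s) ⁻¹' Ioi 0 = Ioi s by ext; simp] at this

theorem lintegral_rpow_Ioc {c p : ℝ} (hc : 0 ≤ c) (hp : -1 < p) :
    ∫⁻ u in Ioc 0 c, ENNReal.ofReal (u ^ p) = ENNReal.ofReal (c ^ (p + 1) / (p + 1)) := by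
  rw [← ofReal_integral_eq_lintegral_ofReal, ← intervalIntegral.integral_of_le hc,
    integral_rpow (.inl hp), zero_rpow (by linarith), sub_zero]
  · exact (intervalIntegrable_iff_integrableOn_Ioc_of_le hc).1
      (intervalIntegral.intervalIntegrable_rpow' hp)
  · filter_upwards [self_mem_ae_restrict measurableSet_Ioc] with u hu
    exact rpow_nonneg hu.1.le _

theorem lintegral_rpow_Ioi {c p : ℝ} (hc : 0 < c) (hp : p < -1) :
    ∫⁻ u in Ioi c, ENNReal.ofReal (u ^ p) = ENNReal.ofReal (-c ^ (p + 1) / (p + 1)) := by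
  rw [← ofReal_integral_eq_lintegral_ofReal (integrableOn_Ioi_rpow_of_lt hp hc),
    integral_Ioi_rpow_of_lt hp hc]
  filter_upwards [self_mem_ae_restrict measurableSet_Ioi] with u hu
  exact rpow_nonneg (hc.trans hu).le _

theorem lintegral_rpow_mul_exp_neg_mul_Ioi {a r : ℝ} (ha : 0 < a) (hr : 0 < r) :
    ∫⁻ t in Ioi 0, ENNReal.ofReal (t ^ (a - 1) * exp (-(r * t))) =
      ENNReal.ofReal ((1 / r) ^ a * Gamma a) := by
  have hint := integral_rpow_mul_exp_neg_mul_Ioi ha hr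
  rw [← hint, ofReal_integral_eq_lintegral_ofReal]
  · exact .of_integral_ne_zero (by rw [hint]; positivity)
  · filter_upwards [self_mem_ae_restrict measurableSet_Ioi] with t ht
    exact mul_nonneg (rpow_nonneg (le_of_lt ht) _) (exp_pos _).le

theorem integrableOn_rpow_mul_rpow_sub_Ioc {T a c : ℝ} (ha₀ : 0 < a) (ha₁ : a ≤ 1)
    (hc₀ : 0 < c) (hc₁ : c ≤ 1) :
    IntegrableOn (fun s => s ^ (a - 1) * (T - s) ^ (c - 1)) (Ioc 0 T) := by
  have hleft : IntegrableOn (fun s : ℝ => s ^ (a - 1)) (Ioc 0 T) :=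
    (intervalIntegral.intervalIntegrable_rpow' (a := 0) (b := T) (by linarith)).1
  have hright : IntegrableOn (fun s : ℝ => (T - s) ^ (c - 1)) (Ioc 0 T) := by
    have := ((intervalIntegral.intervalIntegrable_rpow' (a := 0) (b := T)
      (r := c - 1) (by linarith)).comp_sub_left T).symm
    simpa only [sub_self, sub_zero] using this.1
  refine ((hleft.const_mul ((T / 2) ^ (c - 1))).add
    (hright.const_mul ((T / 2) ^ (a - 1)))).mono' (by fun_prop) ?_
  filter_upwards [self_mem_ae_restrict measurableSet_Ioc] with s ⟨hs₀, hsT⟩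
  have hl : 0 ≤ s ^ (a - 1) := rpow_nonneg hs₀.le _
  have hr : 0 ≤ (T - s) ^ (c - 1) := rpow_nonneg (by linarith) _
  rw [Real.norm_of_nonneg (mul_nonneg hl hr), Pi.add_apply]
  -- one of the two factors is bounded by its value at the midpoint `T / 2`
  rcases le_or_gt s (T / 2) with h | h
  · have : (T - s) ^ (c - 1) ≤ (T / 2) ^ (c - 1) :=
      rpow_le_rpow_of_nonpos (by linarith) (by linarith) (by linarith)
    nlinarith [rpow_nonneg (by linarith : (0:ℝ) ≤ T / 2) (a - 1)]
  · have : s ^ (a - 1) ≤ (T / 2) ^ (a - 1) :=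
      rpow_le_rpow_of_nonpos (by linarith) h.le (by linarith)
    nlinarith [rpow_nonneg (by linarith : (0:ℝ) ≤ T / 2) (c - 1)]

theorem lintegral_min_one_mul_rpow_le {b p : ℝ} (hb : 0 < b) (hp₀ : 0 < p) (hp₁ : p < 1) :
    ∫⁻ u in Ioi 0, ENNReal.ofReal (min 1 (b * u) * u ^ (-p - 1)) ≤
      ENNReal.ofReal ((1 / (1 - p) + 1 / p) * b ^ p) := by
  have hc : 0 < b⁻¹ := inv_pos.2 hb
  have hbp : 0 < b ^ p := rpow_pos_of_pos hb p
  rw [← Ioc_union_Ioi_eq_Ioi hc.le, lintegral_union measurableSet_Ioi Ioc_disjoint_Ioi_same]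
  -- below `1 / b` the minimum is `b * u`, above it is `1`
  have hnear : ∫⁻ u in Ioc 0 b⁻¹, ENNReal.ofReal (min 1 (b * u) * u ^ (-p - 1)) ≤
      ENNReal.ofReal (b ^ p / (1 - p)) := by
    calc _ ≤ ∫⁻ u in Ioc 0 b⁻¹, ENNReal.ofReal b * ENNReal.ofReal (u ^ (-p)) := by
          refine setLIntegral_mono' measurableSet_Ioc fun u hu => ?_
          rw [← ENNReal.ofReal_mul hb.le]
          refine ENNReal.ofReal_le_ofReal ?_
          calc min 1 (b * u) * u ^ (-p - 1) ≤ b * u * u ^ (-p - 1) :=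
                mul_le_mul_of_nonneg_right (min_le_right _ _) (rpow_nonneg hu.1.le _)
            _ = b * u ^ (-p) := by
                rw [rpow_sub_one hu.1.ne', mul_assoc, mul_div_cancel₀ _ hu.1.ne']
      _ = ENNReal.ofReal (b ^ p / (1 - p)) := by
          rw [lintegral_const_mul' _ _ ENNReal.ofReal_ne_top,
            lintegral_rpow_Ioc hc.le (by linarith),
            ← ENNReal.ofReal_mul hb.le, inv_rpow hb.le, rpow_add_one hb.ne', rpow_neg hb.le]
          congr 1
          field_simp
          ring
  have hfar : ∫⁻ u in Ioi b⁻¹, ENNReal.ofReal (min 1 (b * u) * u ^ (-p - 1)) ≤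
      ENNReal.ofReal (b ^ p / p) := by
    calc _ ≤ ∫⁻ u in Ioi b⁻¹, ENNReal.ofReal (u ^ (-p - 1)) := by
          refine setLIntegral_mono' measurableSet_Ioi fun u hu => ENNReal.ofReal_le_ofReal ?_
          exact mul_le_of_le_one_left (rpow_nonneg (hc.trans hu).le _) (min_le_left _ _)
      _ = ENNReal.ofReal (b ^ p / p) := by
          rw [lintegral_rpow_Ioi hc (by linarith), sub_add_cancel, inv_rpow hb.le, rpow_neg hb.le,
            inv_inv]
          congr 1
          field_simp
  calc _ ≤ ENNReal.ofReal (b ^ p / (1 - p)) + ENNReal.ofReal (b ^ p / p) := add_le_add hnear hfar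
    _ = _ := by
        rw [← ENNReal.ofReal_add (div_nonneg hbp.le (by linarith)) (div_nonneg hbp.le hp₀.le)]
        ring_nf

theorem lintegral_exp_mul_rpow_sub_le {H T b : ℝ} (hH₀ : 0 < H) (hH₁ : H < 1 / 2) (hb : 0 < b) :
    ∫⁻ s in Ioc 0 T, ENNReal.ofReal (exp (-2 * b * s) * (T - s) ^ (2 * H - 1)) ≤
      ENNReal.ofReal (2 ^ (-(2 * H))) *
        (∫⁻ s in Ioc 0 T, ENNReal.ofReal (s ^ ((1 - 2 * H) - 1) * (T - s) ^ (2 * H - 1))) *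
        ENNReal.ofReal (b ^ (-(2 * H))) := by
  rw [mul_right_comm, ← ENNReal.ofReal_mul (by positivity),
    ← lintegral_const_mul' _ _ ENNReal.ofReal_ne_top]
  refine setLIntegral_mono' measurableSet_Ioc fun s ⟨hs₀, hsT⟩ => ?_
  rw [← ENNReal.ofReal_mul (by positivity)]
  refine ENNReal.ofReal_le_ofReal ?_
  have hexp : exp (-2 * b * s) ≤ 2 ^ (-(2 * H)) * b ^ (-(2 * H)) * s ^ ((1 - 2 * H) - 1) :=
    calc exp (-2 * b * s) = exp (-(2 * b * s)) := by ring_nf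
      _ ≤ (2 * b * s) ^ (-(2 * H)) :=
          exp_neg_le_rpow_neg (by positivity) (by linarith) (by linarith)
      _ = _ := by
          rw [mul_rpow (by positivity) hs₀.le, mul_rpow zero_le_two hb.le]
          ring_nf
  calc exp (-2 * b * s) * (T - s) ^ (2 * H - 1)
      ≤ 2 ^ (-(2 * H)) * b ^ (-(2 * H)) * s ^ ((1 - 2 * H) - 1) * (T - s) ^ (2 * H - 1) :=
        mul_le_mul_of_nonneg_right hexp (rpow_nonneg (by linarith) _)
    _ = _ := by ring

theorem lintegral_exp_mul_rpow_le {H T b : ℝ} (hH₀ : 0 < H) (hb : 0 < b) :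
    ∫⁻ s in Ioc 0 T, ENNReal.ofReal (exp (-2 * b * s) * s ^ (2 * H - 1)) ≤
      ENNReal.ofReal (2 ^ (-(2 * H)) * Gamma (2 * H)) * ENNReal.ofReal (b ^ (-(2 * H))) :=
  calc _ ≤ ∫⁻ s in Ioi 0, ENNReal.ofReal (exp (-2 * b * s) * s ^ (2 * H - 1)) :=
        lintegral_mono_set Ioc_subset_Ioi_self
    _ = ∫⁻ s in Ioi 0, ENNReal.ofReal (s ^ (2 * H - 1) * exp (-(2 * b * s))) :=
        lintegral_congr fun s => by ring_nf
    _ = _ := by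
        rw [lintegral_rpow_mul_exp_neg_mul_Ioi (by positivity) (by positivity),
          ← ENNReal.ofReal_mul (by positivity), one_div, inv_rpow (by positivity),
          mul_rpow zero_le_two hb.le, rpow_neg zero_le_two, rpow_neg hb.le]
        ring_nf

theorem lintegral_exp_sub_exp_mul_rpow_le {H T b : ℝ} (hH₀ : 0 < H) (hH₁ : H < 1 / 2)
    (hb : 0 < b) (s : ℝ) :
    ∫⁻ t in Ioc s T, ENNReal.ofReal ((exp (-b * s) - exp (-b * t)) * (t - s) ^ (H - 3 / 2)) ≤
      ENNReal.ofReal (exp (-b * s)) *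
        ENNReal.ofReal ((1 / (H + 1 / 2) + 1 / (1 / 2 - H)) * b ^ (1 / 2 - H)) :=
  calc _ ≤ ∫⁻ t in Ioi s, ENNReal.ofReal (exp (-b * s)) *
        ENNReal.ofReal (min 1 (b * (t - s)) * (t - s) ^ (-(1 / 2 - H) - 1)) := by
        refine (lintegral_mono_set Ioc_subset_Ioi_self).trans
          (setLIntegral_mono' measurableSet_Ioi fun t ht => ?_)
        rw [← ENNReal.ofReal_mul (exp_pos _).le, ← mul_assoc,
          show -(1 / 2 - H) - 1 = H - 3 / 2 by ring]
        exact ENNReal.ofReal_le_ofReal (mul_le_mul_of_nonneg_right (exp_neg_sub_exp_neg_le b s t)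
          (rpow_nonneg (sub_pos.2 ht).le _))
    _ = ENNReal.ofReal (exp (-b * s)) *
        ∫⁻ u in Ioi 0, ENNReal.ofReal (min 1 (b * u) * u ^ (-(1 / 2 - H) - 1)) := by
        rw [lintegral_const_mul' _ _ ENNReal.ofReal_ne_top, setLIntegral_Ioi_comp_sub_right
          (fun u => ENNReal.ofReal (min 1 (b * u) * u ^ (-(1 / 2 - H) - 1)))]
    _ ≤ _ := by
        gcongr
        refine (lintegral_min_one_mul_rpow_le hb (p := 1 / 2 - H) (by linarith)
          (by linarith)).trans_eq ?_
        ring_nf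

theorem lintegral_sq_lintegral_exp_sub_exp_mul_rpow_le {H T b : ℝ} (hH₀ : 0 < H)
    (hH₁ : H < 1 / 2) (hb : 0 < b) :
    ∫⁻ s in Ioc 0 T, (∫⁻ t in Ioc s T,
        ENNReal.ofReal ((exp (-b * s) - exp (-b * t)) * (t - s) ^ (H - 3 / 2))) ^ 2 ≤
      ENNReal.ofReal ((1 / (H + 1 / 2) + 1 / (1 / 2 - H)) ^ 2 / 2) *
        ENNReal.ofReal (b ^ (-(2 * H))) := by
  set K := 1 / (H + 1 / 2) + 1 / (1 / 2 - H)
  have hK : 0 ≤ K :=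
    add_nonneg (by rw [one_div_nonneg]; linarith) (by rw [one_div_nonneg]; linarith)
  calc _ ≤ ∫⁻ s in Ioi 0, ENNReal.ofReal (K * b ^ (1 / 2 - H)) ^ 2 *
        ENNReal.ofReal (s ^ ((1 : ℝ) - 1) * exp (-(2 * b * s))) := by
        refine (lintegral_mono_set Ioc_subset_Ioi_self).trans
          (setLIntegral_mono' measurableSet_Ioi fun s _ => ?_)
        calc _ ≤ (ENNReal.ofReal (exp (-b * s)) * ENNReal.ofReal (K * b ^ (1 / 2 - H))) ^ 2 := by
              gcongr
              exact lintegral_exp_sub_exp_mul_rpow_le hH₀ hH₁ hb s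
          _ = _ := by
              rw [mul_pow, mul_comm, ← ENNReal.ofReal_pow (exp_pos _).le, sub_self, rpow_zero,
                one_mul, ← exp_nat_mul]
              ring_nf
    _ = ENNReal.ofReal (K * b ^ (1 / 2 - H)) ^ 2 *
          ENNReal.ofReal ((1 / (2 * b)) ^ (1 : ℝ) * Gamma 1) := by
        rw [lintegral_const_mul' _ _ (ENNReal.pow_ne_top ENNReal.ofReal_ne_top),
          lintegral_rpow_mul_exp_neg_mul_Ioi one_pos (by positivity)]
    _ = _ := by
        have hpow : (b ^ (1 / 2 - H)) ^ 2 = b / b ^ (2 * H) := by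
          rw [← rpow_natCast, ← rpow_mul hb.le, show (1 / 2 - H) * ((2 : ℕ) : ℝ) = 1 - 2 * H by
            push_cast; ring, rpow_sub hb, rpow_one]
        rw [← ENNReal.ofReal_pow (by positivity), ← ENNReal.ofReal_mul (by positivity),
          ← ENNReal.ofReal_mul (by positivity), rpow_one, Gamma_one, mul_pow, hpow, rpow_neg hb.le]
        congr 1
        field_simp

noncomputable def expSingularIntegrals (H T b : ℝ) : ℝ≥0∞ :=
  (∫⁻ s in Ioc 0 T, ENNReal.ofReal (exp (-2 * b * s) * (T - s) ^ (2 * H - 1))) +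
    (∫⁻ s in Ioc 0 T, ENNReal.ofReal (exp (-2 * b * s) * s ^ (2 * H - 1))) +
    ∫⁻ s in Ioc 0 T, (∫⁻ t in Ioc s T,
      ENNReal.ofReal ((exp (-b * s) - exp (-b * t)) * (t - s) ^ (H - 3 / 2))) ^ 2

theorem exists_expSingularIntegrals_le {H : ℝ} (hH₀ : 0 < H) (hH₁ : H < 1 / 2) (T : ℝ) :
    ∃ C ≠ ∞, ∀ b, 0 < b → expSingularIntegrals H T b ≤ C * ENNReal.ofReal (b ^ (-(2 * H))) := by
  set B := ∫⁻ s in Ioc 0 T, ENNReal.ofReal (s ^ ((1 - 2 * H) - 1) * (T - s) ^ (2 * H - 1))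
  have hB : B ≠ ∞ := (integrableOn_rpow_mul_rpow_sub_Ioc (by linarith) (by linarith)
    (by linarith) (by linarith)).lintegral_lt_top.ne
  refine ⟨ENNReal.ofReal (2 ^ (-(2 * H))) * B + ENNReal.ofReal (2 ^ (-(2 * H)) * Gamma (2 * H)) +
    ENNReal.ofReal ((1 / (H + 1 / 2) + 1 / (1 / 2 - H)) ^ 2 / 2), ?_, fun b hb => ?_⟩
  · finiteness
  · rw [add_mul, add_mul]
    exact add_le_add (add_le_add (lintegral_exp_mul_rpow_sub_le hH₀ hH₁ hb)
      (lintegral_exp_mul_rpow_le hH₀ hb))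
      (lintegral_sq_lintegral_exp_sub_exp_mul_rpow_le hH₀ hH₁ hb)

theorem statement19_general (H T : ℝ) (hH : H ∈ Set.Ioo (0 : ℝ) (1 / 2))
    (l : ℕ → ℝ) (hl : ∀ k, 0 < l k) (q : ℕ → ℝ)
    (hsum : Summable fun k => q k ^ 2 / (l k) ^ (2 * H)) :
    (∑' k, ENNReal.ofReal (q k ^ 2) *
        ((∫⁻ s in Set.Ioc (0 : ℝ) T,
            ENNReal.ofReal (Real.exp (-2 * l k * s) * (T - s) ^ (2 * H - 1))) +
         (∫⁻ s in Set.Ioc (0 : ℝ) T,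
            ENNReal.ofReal (Real.exp (-2 * l k * s) * s ^ (2 * H - 1))) +
         (∫⁻ s in Set.Ioc (0 : ℝ) T,
            (∫⁻ t in Set.Ioc s T,
              ENNReal.ofReal ((Real.exp (-(l k) * s) - Real.exp (-(l k) * t)) *
                (t - s) ^ (H - 3 / 2))) ^ 2))) < ⊤ := by
  obtain ⟨C, hC, hbound⟩ := exists_expSingularIntegrals_le hH.1 hH.2 T
  calc ∑' k, ENNReal.ofReal (q k ^ 2) * expSingularIntegrals H T (l k)
      ≤ ∑' k, C * ENNReal.ofReal (q k ^ 2 / l k ^ (2 * H)) := ENNReal.tsum_le_tsum fun k =>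
        calc _ ≤ ENNReal.ofReal (q k ^ 2) * (C * ENNReal.ofReal (l k ^ (-(2 * H)))) := by
              gcongr; exact hbound _ (hl k)
          _ = _ := by
              rw [mul_left_comm, ← ENNReal.ofReal_mul (sq_nonneg _), rpow_neg (hl k).le,
                div_eq_mul_inv]
    _ = C * ENNReal.ofReal (∑' k, q k ^ 2 / l k ^ (2 * H)) := by
        rw [ENNReal.tsum_mul_left, ENNReal.ofReal_tsum_of_nonneg
          (fun k => div_nonneg (sq_nonneg _) (rpow_nonneg (hl k).le _)) hsum]
    _ < ⊤ := ENNReal.mul_lt_top hC.lt_top ENNReal.ofReal_lt_top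

/-- For `H < 1/2`: if `∑ q_k²/λ_k^{2H} < ∞` then the sum over `k` of `q_k²` times the three
singular integrals appearing in the `K*`-norm of `s ↦ e^{-λ_k s}` is finite (the
Hilbert–Schmidt criterion for the stochastic heat equation driven by cylindrical fBm). -/
theorem statement19 (H T : ℝ) (hH : H ∈ Set.Ioo (0 : ℝ) (1 / 2)) (hT : 0 < T)
    (l : ℕ → ℝ) (hl : ∀ k, 0 < l k) (q : ℕ → ℝ)
    (hsum : Summable fun k => q k ^ 2 / (l k) ^ (2 * H)) :
    (∑' k, ENNReal.ofReal (q k ^ 2) *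
        ((∫⁻ s in Set.Ioc (0 : ℝ) T,
            ENNReal.ofReal (Real.exp (-2 * l k * s) * (T - s) ^ (2 * H - 1))) +
         (∫⁻ s in Set.Ioc (0 : ℝ) T,
            ENNReal.ofReal (Real.exp (-2 * l k * s) * s ^ (2 * H - 1))) +
         (∫⁻ s in Set.Ioc (0 : ℝ) T,
            (∫⁻ t in Set.Ioc s T,
              ENNReal.ofReal ((Real.exp (-(l k) * s) - Real.exp (-(l k) * t)) *
                (t - s) ^ (H - 3 / 2))) ^ 2))) < ⊤ :=
  statement19_general H T hH l hl q hsum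
end
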